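/- arXiv:math/0605716 — 3 statements merged into one kernel-verified Lean document; each statement's English description precedes it below -/
import Mathlib

section
/- Let (A,⋆) be a semigroup and let M, N be finitely supported moulds on A with N^∅ = 0. Then the mould M∘N is finitely supported, and in the monoid algebra ℂ⟨A⟩ of the free monoid on A one has Σ_{𝐚∈A*} (M∘N)^𝐚·𝐚 = Σ_{𝐛=b_1⋯b_k∈A*} M^𝐛·Φ_N^{b_1}⋯Φ_N^{b_k}, where for b ∈ A the homogeneous component Φ_N^{b} := Σ_{𝐚≠∅, ‖𝐚‖=b} N^𝐚·𝐚 (a finite sum), and the product Φ_N^{b_1}⋯Φ_N^{b_k} is taken in ℂ⟨A⟩ (the empty product, for 𝐛 = ∅, being 1). In other words, mould composition corresponds to substitution of non-commutative generating series. -/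
/-!
Both sides regroup one finitely supported sum over lists of blocks `L = [𝐚¹, …, 𝐚ᵏ]`, with terms
`M^{‖𝐚¹‖⋯‖𝐚ᵏ‖} N^{𝐚¹}⋯N^{𝐚ᵏ} · 𝐚¹⋯𝐚ᵏ`. Grouping by the concatenation `𝐚¹⋯𝐚ᵏ` gives the left
side, since the compositions of a word are exactly its splittings into nonempty blocks. Grouping
by the word of block sums `‖𝐚¹‖⋯‖𝐚ᵏ‖` gives the right side, after expanding each product
`Φ_N^{b_1}⋯Φ_N^{b_k}` into a sum over the lists of blocks with these block sums. Lists with an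
empty block contribute nothing because `N^∅ = 0`.
-/

/- A mould on an alphabet `A` is a function from words (lists) over `A` to `ℂ`. -/
noncomputable section

abbrev Mould (A : Type*) := List A → ℂ

/-- The unit mould `1^•`: equal to `1` on the empty word and `0` elsewhere. -/
def mone {A : Type*} : Mould A
  | [] => 1
  | _ :: _ => 0

/-- The mould product `(M·N)^𝐚 = Σ_{𝐚¹𝐚²=𝐚} M^{𝐚¹} N^{𝐚²}`. -/
def mprod {A : Type*} (M N : Mould A) : Mould A :=
  fun a => ∑ i ∈ Finset.range (a.length + 1), M (a.take i) * N (a.drop i)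

/-- `[M]_{(×n)}`: the `n`-fold mould product of `M` with itself, `[M]_{(×0)} = 1^•`. -/
def mpow {A : Type*} (M : Mould A) : ℕ → Mould A
  | 0 => mone
  | n + 1 => mprod M (mpow M n)

/-- The mould exponential `Exp M = Σ_{n≥0} [M]_{(×n)}/n!`; on a word `𝐚` the sum is
finite since (for `M^∅ = 0`) the terms with `n > l(𝐚)` vanish. -/
def mExp {A : Type*} (M : Mould A) : Mould A :=
  fun a => ∑ n ∈ Finset.range (a.length + 1), (n.factorial : ℂ)⁻¹ * mpow M n a

/-- The mould logarithm `Log M = Σ_{n≥1} (−1)^{n+1}[M]_{(×n)}/n`; on a word `𝐚` the sum is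
finite since (for `M^∅ = 0`) the terms with `n > l(𝐚)` vanish. -/
def mLog {A : Type*} (M : Mould A) : Mould A :=
  fun a => ∑ n ∈ Finset.Icc 1 a.length, (-1 : ℂ) ^ (n + 1) * (n : ℂ)⁻¹ * mpow M n a
/-- The sum `‖𝐚‖ = a_1 ⋆ ⋯ ⋆ a_r ∈ A` of the letters of a nonempty word
(`none` on the empty word). -/
def blockSum {A : Type*} [Add A] : List A → Option A
  | [] => none
  | x :: t => some (t.foldl (· + ·) x)

/-- Mould composition: `(M∘N)^𝐚 = Σ_k Σ_{𝐚¹⋯𝐚ᵏ=𝐚, 𝐚ⁱ≠∅} M^{‖𝐚¹‖⋯‖𝐚ᵏ‖}·N^{𝐚¹}⋯N^{𝐚ᵏ}`,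
the sum ranging over decompositions of `𝐚` into nonempty consecutive blocks
(in particular `(M∘N)^∅ = M^∅`). -/
def mcomp {A : Type*} [Add A] (M N : Mould A) : Mould A := fun a =>
  ∑ c : Composition a.length,
    M (((a.splitWrtComposition c).map blockSum).reduceOption) *
      ((a.splitWrtComposition c).map N).prod

open scoped BigOperators

/-- The word `𝐚` viewed as an element of the monoid algebra `ℂ⟨A⟩` of the free
monoid on `A`. -/
def word {A : Type*} (a : List A) : MonoidAlgebra ℂ (FreeMonoid A) :=
  MonoidAlgebra.single (FreeMonoid.ofList a) 1

/-- The homogeneous component `Φ_N^b = Σ_{𝐚≠∅, ‖𝐚‖=b} N^𝐚·𝐚` of the generating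
series of `N`. -/
def Phi {A : Type*} [Add A] (N : Mould A) (b : A) : MonoidAlgebra ℂ (FreeMonoid A) :=
  ∑ᶠ (a : List A) (_ : a ≠ [] ∧ blockSum a = some b), N a • word a

open Function

section ListPi

variable {α β : Type*}

@[simps]
def List.consEmbedding : α × List α ↪ List α where
  toFun p := p.1 :: p.2
  inj' p q h := by simpa [Prod.ext_iff] using h

def listPi (s : β → Finset α) : List β → Finset (List α)
  | [] => {[]}
  | x :: l => (s x ×ˢ listPi s l).map List.consEmbedding

theorem mem_listPi {s : β → Finset α} {l : List β} {L : List α} :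
    L ∈ listPi s l ↔ List.Forall₂ (fun a x => a ∈ s x) L l := by
  induction l generalizing L with
  | nil => simp [listPi]
  | cons x l ih => cases L <;> simp [listPi, ih]

theorem prod_map_sum_eq_sum_listPi {R : Type*} [Semiring R] (s : β → Finset α) (f : α → R)
    (l : List β) : (l.map fun x => ∑ a ∈ s x, f a).prod = ∑ L ∈ listPi s l, (L.map f).prod := by
  induction l with
  | nil => simp [listPi]
  | cons x l ih =>
    simp [listPi, Finset.sum_map, Finset.sum_product, Finset.sum_mul_sum, ih]

theorem finite_setOf_forall₂ {r : α → β → Prop} (hr : ∀ x, {a | r a x}.Finite) (l : List β) :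
    {L | List.Forall₂ r L l}.Finite :=
  (listPi (fun x => (hr x).toFinset) l).finite_toSet.subset fun _ hL =>
    mem_listPi.2 (List.Forall₂.imp (fun _ _ h => (hr _).mem_toFinset.2 h) hL)

theorem prod_map_finsum_cond {R : Type*} [Semiring R] (r : α → β → Prop) {f : α → R}
    (hf : (support f).Finite) (l : List β) :
    (l.map fun x => ∑ᶠ (a) (_ : r a x), f a).prod =
      ∑ᶠ (L) (_ : List.Forall₂ r L l), (L.map f).prod := by
  classical
  set s : β → Finset α := fun x => hf.toFinset.filter (r · x)
  have hs : ∀ x a, a ∈ s x ↔ f a ≠ 0 ∧ r a x := by simp [s]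
  have hfactor : ∀ x, ∑ᶠ (a) (_ : r a x), f a = ∑ a ∈ s x, f a := fun x =>
    finsum_cond_eq_sum_of_cond_iff f fun {a} ha => by simp [hs, ha]
  simp_rw [hfactor, prod_map_sum_eq_sum_listPi]
  refine (finsum_cond_eq_sum_of_cond_iff _ fun {L} hL => ?_).symm
  have hsupp : ∀ a ∈ L, f a ≠ 0 := fun a ha h0 =>
    hL (List.prod_eq_zero (h0 ▸ List.mem_map_of_mem ha))
  have hmem : L ∈ listPi s l ↔ List.Forall₂ (fun a x => f a ≠ 0 ∧ r a x) L l := by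
    simp only [mem_listPi, hs]
  rw [hmem, List.forall₂_and_left, and_iff_right hsupp]

end ListPi

section Fiberwise

variable {α β M : Type*} [AddCommMonoid M]

theorem support_finsum_fiber_subset (g : β → α) (t : β → M) :
    support (fun a => ∑ᶠ (b) (_ : g b = a), t b) ⊆ g '' support t := by
  intro a ha
  obtain ⟨b, hb, htb⟩ := exists_ne_zero_of_finsum_mem_ne_zero (s := {b | g b = a}) ha
  exact ⟨b, htb, hb⟩

theorem finsum_fiberwise (g : β → α) {t : β → M} (ht : (support t).Finite) :
    ∑ᶠ a, ∑ᶠ (b) (_ : g b = a), t b = ∑ᶠ b, t b := by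
  classical
  have hfiber : ∀ a, ∑ᶠ (b) (_ : g b = a), t b = ∑ b ∈ ht.toFinset with g b = a, t b :=
    fun a => finsum_cond_eq_sum_of_cond_iff t fun {b} hb => by simp [hb]
  rw [finsum_eq_sum_of_support_subset t (s := ht.toFinset) (by simp),
    finsum_eq_sum_of_support_subset _ (s := ht.toFinset.image g)
      (by simpa using support_finsum_fiber_subset g t)]
  simp_rw [hfiber]
  exact Finset.sum_fiberwise_of_maps_to (fun b hb => Finset.mem_image_of_mem g hb) t

end Fiberwise

theorem sum_splitWrtComposition_eq_finsum_flatten {α M : Type*} [AddCommMonoid M]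
    {t : List (List α) → M} (ht : ∀ L, [] ∈ L → t L = 0) (a : List α) :
    ∑ c : Composition a.length, t (a.splitWrtComposition c) =
      ∑ᶠ (L) (_ : L.flatten = a), t L := by
  classical
  have hbij : Set.BijOn (a.splitWrtComposition (n := a.length)) Set.univ
      {L | L.flatten = a ∧ [] ∉ L} := by
    refine ⟨fun c _ => ⟨a.flatten_splitWrtComposition c, fun h => ?_⟩, fun c _ c' _ h => ?_, ?_⟩
    · exact (List.length_pos_of_mem_splitWrtComposition h).ne' rfl
    · exact Composition.ext (by
        rw [← a.map_length_splitWrtComposition c, h, a.map_length_splitWrtComposition])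
    · rintro L ⟨rfl, hL⟩
      refine ⟨⟨L.map List.length, ?_, by simp [List.length_flatten]⟩, trivial,
        List.splitWrtComposition_flatten L _ rfl⟩
      simp only [List.mem_map]
      rintro _ ⟨x, hx, rfl⟩
      exact List.length_pos_iff.2 fun h => hL (h ▸ hx)
  rw [← finsum_eq_sum_of_fintype, ← finsum_mem_univ,
    finsum_mem_eq_of_bijOn _ hbij fun _ _ => rfl]
  refine finsum_congr fun L => ?_
  by_cases hL : [] ∈ L <;> simp [hL, ht]

section Words

variable {A : Type*}

theorem word_nil : word ([] : List A) = 1 := rfl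

theorem word_append (u v : List A) : word (u ++ v) = word u * word v := by
  simp [word, MonoidAlgebra.single_mul_single, FreeMonoid.ofList_append]

theorem word_ne_zero (a : List A) : word a ≠ 0 := by
  simp [word]

theorem prod_map_smul_word (N : Mould A) (L : List (List A)) :
    (L.map fun a => N a • word a).prod = (L.map N).prod • word L.flatten := by
  induction L with
  | nil => simp [word_nil]
  | cons a L ih =>
    rw [List.map_cons, List.prod_cons, ih, smul_mul_smul_comm, ← word_append]
    rfl

end Words

section Blocks

variable {A : Type*} [Add A]

def blockSums (L : List (List A)) : List A := (L.map blockSum).reduceOption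

theorem ne_nil_of_blockSum_eq_some {a : List A} {x : A} (h : blockSum a = some x) : a ≠ [] := by
  rintro rfl
  cases h

theorem forall₂_blockSum_iff {L : List (List A)} {b : List A} :
    List.Forall₂ (fun a x => blockSum a = some x) L b ↔ [] ∉ L ∧ blockSums L = b := by
  induction L generalizing b with
  | nil => simp [blockSums, eq_comm]
  | cons a L ih =>
    cases a with
    | nil => simp [List.forall₂_cons_left_iff, blockSum]
    | cons y t =>
      cases b with
      | nil => simp [blockSums, blockSum]
      | cons x b =>
        rw [List.forall₂_cons, ih]
        simp [blockSums, blockSum, and_left_comm]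

end Blocks

section Composition

variable {A : Type*} [Add A] {M N : Mould A}

def blockTerm (M N : Mould A) (L : List (List A)) : MonoidAlgebra ℂ (FreeMonoid A) :=
  (M (blockSums L) * (L.map N).prod) • word L.flatten

theorem blockTerm_eq_zero_of_nil_mem (hN0 : N [] = 0) (L : List (List A)) (hL : [] ∈ L) :
    blockTerm M N L = 0 := by
  simp [blockTerm, List.prod_eq_zero (hN0 ▸ List.mem_map_of_mem hL : (0 : ℂ) ∈ L.map N)]

theorem mcomp_smul_word (hN0 : N [] = 0) (a : List A) :
    mcomp M N a • word a = ∑ᶠ (L) (_ : L.flatten = a), blockTerm M N L := by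
  rw [← sum_splitWrtComposition_eq_finsum_flatten (blockTerm_eq_zero_of_nil_mem hN0), mcomp,
    Finset.sum_smul]
  refine Finset.sum_congr rfl fun c _ => ?_
  rw [blockTerm, a.flatten_splitWrtComposition c]
  rfl

theorem Phi_eq_finsum (N : Mould A) (x : A) :
    Phi N x = ∑ᶠ (a) (_ : blockSum a = some x), N a • word a := by
  refine finsum_congr fun a => ?_
  rw [and_iff_right_of_imp ne_nil_of_blockSum_eq_some]

theorem prod_map_Phi (hN : (support N).Finite) (b : List A) :
    (b.map (Phi N)).prod = ∑ᶠ (L) (_ : List.Forall₂ (fun a x => blockSum a = some x) L b),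
      (L.map fun a => N a • word a).prod := by
  rw [show Phi N = _ from funext (Phi_eq_finsum N)]
  exact prod_map_finsum_cond _ (hN.subset (support_smul_subset_left _ _)) b

theorem smul_prod_map_Phi (hN : (support N).Finite) (hN0 : N [] = 0) (b : List A) :
    M b • (b.map (Phi N)).prod = ∑ᶠ (L) (_ : blockSums L = b), blockTerm M N L := by
  rw [prod_map_Phi hN, smul_finsum]
  refine finsum_congr fun L => ?_
  by_cases hL : [] ∈ L
  · simp [forall₂_blockSum_iff, hL, blockTerm_eq_zero_of_nil_mem hN0 L hL]
  · rw [smul_finsum]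
    simp only [forall₂_blockSum_iff, hL, not_false_eq_true, true_and]
    refine finsum_congr fun hb => ?_
    rw [blockTerm, prod_map_smul_word, smul_smul, hb]

theorem finite_support_blockTerm (hM : (support M).Finite) (hN : (support N).Finite)
    (hN0 : N [] = 0) : (support (blockTerm M N)).Finite := by
  refine (hM.biUnion fun b _ => finite_setOf_forall₂
    (r := fun a x => N a ≠ 0 ∧ blockSum a = some x) (fun _ => hN.subset fun _ h => h.1) b).subset ?_
  intro L hL
  have hcoef : M (blockSums L) * (L.map N).prod ≠ 0 := fun h => hL (by simp [blockTerm, h])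
  have hNL : ∀ a ∈ L, N a ≠ 0 := fun a ha h0 =>
    right_ne_zero_of_mul hcoef (List.prod_eq_zero (h0 ▸ List.mem_map_of_mem ha))
  refine Set.mem_biUnion (left_ne_zero_of_mul hcoef) ?_
  exact (List.forall₂_and_left _ _).2 ⟨hNL, forall₂_blockSum_iff.2 ⟨fun h => hNL [] h hN0, rfl⟩⟩

end Composition

/-- Mould composition corresponds to substitution of non-commutative generating
series: for finitely supported `M, N` with `N^∅ = 0`, the mould `M∘N` is finitely
supported and `Σ_𝐚 (M∘N)^𝐚·𝐚 = Σ_𝐛 M^𝐛·Φ_N^{b_1}⋯Φ_N^{b_k}` in `ℂ⟨A⟩`. -/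
theorem mcomp_generating_series {A : Type*} [AddSemigroup A] (M N : Mould A)
    (hM : (Function.support M).Finite) (hN : (Function.support N).Finite)
    (hN0 : N [] = 0) :
    (Function.support (mcomp M N)).Finite ∧
    ∑ᶠ a : List A, mcomp M N a • word a =
      ∑ᶠ b : List A, M b • (b.map (Phi N)).prod := by
  have hT := finite_support_blockTerm hM hN hN0
  have hLHS : (fun a => mcomp M N a • word a) =
      fun a => ∑ᶠ (L) (_ : L.flatten = a), blockTerm M N L := funext (mcomp_smul_word hN0)
  refine ⟨(hT.image List.flatten).subset fun a ha => ?_, ?_⟩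
  · refine support_finsum_fiber_subset List.flatten (blockTerm M N) ?_
    rw [Function.mem_support, ← congrFun hLHS a]
    exact smul_ne_zero ha (word_ne_zero a)
  · rw [hLHS, finsum_fiberwise _ hT, ← finsum_fiberwise blockSums hT]
    exact finsum_congr fun b => (smul_prod_map_Phi hN hN0 b).symm

end
end

section
/- Let Z be a mould on A with Z^𝐚 = 0 for every word 𝐚 of length ≠ 1, and write Z^{m} for its value on the one-letter word (m). Then (Exp I · Exp(−Z))^∅ = 1 and, for every nonempty word 𝐧 = m_1⋯m_r of length r ≥ 1, (Exp I · Exp(−Z))^𝐧 = Σ_{j=1}^{r+1} [(−1)^{r+1−j} / ((j−1)!·(r+1−j)!)] · Z^{m_j}·Z^{m_{j+1}}⋯Z^{m_r}, where the product Z^{m_j}⋯Z^{m_r} over an empty index range (j = r+1) equals 1. -/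
/- A mould on an alphabet `A` is a function from words (lists) over `A` to `ℂ`. -/
noncomputable section

/-- The mould `I^•`: equal to `1` on words of length `1` and `0` elsewhere. -/
def mI {A : Type*} : Mould A
  | [_] => 1
  | _ => 0

lemma mpow_of_single {A : Type*} (M : Mould A) (hM : ∀ a : List A, a.length ≠ 1 → M a = 0) :
    ∀ (n : ℕ) (a : List A),
      mpow M n a = if a.length = n then (a.map fun x => M [x]).prod else 0 := by
  intro n
  induction n with
  | zero =>
    intro a
    cases a with
    | nil => simp [mpow, mone]
    | cons x t => simp [mpow, mone]
  | succ n ih =>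
    intro a
    show mprod M (mpow M n) a = _
    rw [mprod, Finset.sum_eq_single 1]
    · cases a with
      | nil => simp [hM [] (by simp), ih]
      | cons x t =>
        simp only [List.take_cons, List.take_zero, List.drop_one, ih, List.length_cons,
          List.tail_cons, List.map_cons, List.prod_cons]
        by_cases h : t.length = n
        · simp [h]
        · simp [h, fun hh => h (Nat.succ_injective hh)]
    · intro i hi hne
      have hle : i ≤ a.length := Nat.lt_succ_iff.mp (Finset.mem_range.mp hi)
      have : (a.take i).length ≠ 1 := by
        rw [List.length_take]; omega
      rw [hM _ this, zero_mul]
    · intro h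
      have : a.length = 0 := by
        simp only [Finset.mem_range] at h; omega
      rw [hM (a.take 1) (by rw [List.length_take]; omega), zero_mul]

lemma mExp_of_single {A : Type*} (M : Mould A) (hM : ∀ a : List A, a.length ≠ 1 → M a = 0)
    (a : List A) :
    mExp M a = ((a.length).factorial : ℂ)⁻¹ * (a.map fun x => M [x]).prod := by
  rw [mExp, Finset.sum_eq_single a.length]
  · rw [mpow_of_single M hM, if_pos rfl]
  · intro n hn hne
    rw [mpow_of_single M hM, if_neg (fun h => hne h.symm), mul_zero]
  · intro h; exact absurd (Finset.self_mem_range_succ _) h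

lemma hI {A : Type*} : ∀ a : List A, a.length ≠ 1 → mI a = 0 := by
  intro a h
  match a with
  | [] => rfl
  | [_] => simp at h
  | _ :: _ :: _ => rfl

lemma prod_map_neg {A : Type*} (l : List A) (f : A → ℂ) :
    (l.map fun x => -f x).prod = (-1 : ℂ) ^ l.length * (l.map f).prod := by
  induction l with
  | nil => simp
  | cons x t ih => simp [ih, pow_succ]; ring

/-- If `Z` vanishes on all words of length `≠ 1` then `(Exp I · Exp(−Z))^∅ = 1` and,
for every nonempty word `𝐧 = m_1⋯m_r`,
`(Exp I · Exp(−Z))^𝐧 = Σ_{j=1}^{r+1} (−1)^{r+1−j}/((j−1)!(r+1−j)!) · Z^{m_j}⋯Z^{m_r}`. -/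
theorem mExpI_mprod_mExp_neg {A : Type*} (Z : Mould A)
    (hZ : ∀ a : List A, a.length ≠ 1 → Z a = 0) :
    mprod (mExp mI) (mExp fun a => -Z a) [] = 1 ∧
    ∀ a : List A, a ≠ [] →
      mprod (mExp mI) (mExp fun a => -Z a) a =
        ∑ j ∈ Finset.Icc 1 (a.length + 1),
          ((-1 : ℂ) ^ (a.length + 1 - j) /
              (((j - 1).factorial : ℂ) * ((a.length + 1 - j).factorial : ℂ))) *
            ((a.drop (j - 1)).map fun x => Z [x]).prod := by
  have hnZ : ∀ a : List A, a.length ≠ 1 → (fun a => -Z a) a = 0 := by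
    intro a h; simp [hZ a h]
  constructor
  · rw [mprod]
    simp [mExp_of_single mI hI, mExp_of_single _ hnZ]
  · intro a ha
    rw [mprod, ← Finset.Ico_add_one_right_eq_Icc, Finset.sum_Ico_eq_sum_range]
    simp only [Nat.add_sub_cancel, show a.length + 1 + 1 - 1 = a.length + 1 from rfl]
    apply Finset.sum_congr rfl
    intro i hi
    have hle : i ≤ a.length := Nat.lt_succ_iff.mp (Finset.mem_range.mp hi)
    rw [mExp_of_single mI hI, mExp_of_single _ hnZ]
    have h1 : ((a.take i).map fun x => mI [x]).prod = 1 := by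
      simp [show (fun x : A => mI [x]) = fun _ => 1 from rfl]
    have h2 : (a.take i).length = i := by rw [List.length_take]; omega
    have h3 : (a.drop i).length = a.length - i := List.length_drop ..
    rw [h1, h2, prod_map_neg, h3]
    have e1 : 1 + i - 1 = i := by omega
    have e2 : a.length + 1 - (1 + i) = a.length - i := by omega
    rw [e1, e2]
    have f1 : ((i.factorial : ℂ)) ≠ 0 := Nat.cast_ne_zero.mpr (Nat.factorial_ne_zero _)
    have f2 : (((a.length - i).factorial : ℂ)) ≠ 0 := Nat.cast_ne_zero.mpr (Nat.factorial_ne_zero _)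
    rw [div_eq_mul_inv, mul_inv]
    ring

end
end

section
/- Let ω : A → ℂ be a weight map, and let Z be a mould on A with Z^𝐚 = 0 for every word 𝐚 of length ≠ 1; write Z^{m} for its value on the one-letter word (m). Define the mould Sem := e^Δ(Exp Z) · (Exp I) · (Exp(−Z)). Then for every word 𝐧 = m_1⋯m_r of length r ≥ 0, Sem^𝐧 = Σ_{0 ≤ i < j ≤ r+1} e^{−(ω(m_1)+⋯+ω(m_i))} · [(−1)^{r+1−j} / (i!·(j−i−1)!·(r+1−j)!)] · (Z^{m_1}⋯Z^{m_i}) · (Z^{m_j}⋯Z^{m_r}), where products over empty index ranges equal 1 (in particular Sem^∅ = 1). Specializing Z to the mould Dem supported on non-resonant letters yields the explicit closed formula for the mould Sem of the simplified form of a diffeomorphism. -/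
/- A mould on an alphabet `A` is a function from words (lists) over `A` to `ℂ`. -/
noncomputable section

/-- Given a weight `ω : A → ℂ` extended additively to words, the operator `e^Δ` on
moulds is `(e^Δ M)^𝐦 = e^{−ω(𝐦)}·M^𝐦`. -/
def eDelta {A : Type*} (ω : A → ℂ) (M : Mould A) : Mould A :=
  fun a => Complex.exp (-(a.map ω).sum) * M a

/-! A mould `M` concentrated on one-letter words has `[M]_{(×n)}` concentrated on words of
length `n`, where it is `M^{m_1}⋯M^{m_n}`; hence `(Exp M)^𝐚 = M^{a_1}⋯M^{a_l}/l!`, with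
`(Exp I)^𝐚 = 1/l!` and an extra sign `(-1)^l` for `Exp(−M)`. Expanding `Sem^𝐧` over the
splittings `𝐧 = 𝐚¹𝐚²𝐚³` with `i = l(𝐚¹)`, `k = l(𝐚²)` and putting `j = i + 1 + k` gives the
closed formula. -/

section

variable {A : Type*}

theorem mprod_nil (M N : Mould A) : mprod M N [] = M [] * N [] := by
  simp [mprod]

theorem mprod_mprod_apply (M N P : Mould A) (a : List A) :
    mprod M (mprod N P) a =
      ∑ i ∈ Finset.range (a.length + 1), ∑ k ∈ Finset.range (a.length - i + 1),
        M (a.take i) * (N ((a.drop i).take k) * P (a.drop (i + k))) := by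
  refine Finset.sum_congr rfl fun i _ => ?_
  rw [mprod, List.length_drop, Finset.mul_sum]
  simp only [List.drop_drop]

def IsLengthOne (M : Mould A) : Prop :=
  ∀ a : List A, a.length ≠ 1 → M a = 0

theorem isLengthOne_mI : IsLengthOne (mI : Mould A) := by
  rintro (_ | ⟨_, _ | _⟩) h
  · rfl
  · exact absurd rfl h
  · rfl

namespace IsLengthOne

variable {M : Mould A}

theorem neg (hM : IsLengthOne M) : IsLengthOne fun b => -M b := by
  intro a ha
  simp [hM a ha]

theorem mprod_cons (hM : IsLengthOne M) (N : Mould A) (x : A) (t : List A) :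
    mprod M N (x :: t) = M [x] * N t := by
  rw [mprod, Finset.sum_eq_single 1]
  · simp
  · intro i hi hi1
    rw [Finset.mem_range, List.length_cons] at hi
    rw [hM _ (by rw [List.length_take, List.length_cons]; omega), zero_mul]
  · simp

theorem mpow_apply (hM : IsLengthOne M) (n : ℕ) (a : List A) :
    mpow M n a = if a.length = n then (a.map fun x => M [x]).prod else 0 := by
  induction n generalizing a with
  | zero => cases a <;> simp [mpow, mone]
  | succ n ih =>
    cases a with
    | nil => simp [mpow, mprod_nil, hM [] (by simp)]
    | cons x t =>
      rw [mpow, hM.mprod_cons, ih]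
      split_ifs <;> simp_all

theorem mExp_apply (hM : IsLengthOne M) (a : List A) :
    mExp M a = (a.length.factorial : ℂ)⁻¹ * (a.map fun x => M [x]).prod := by
  rw [mExp, Finset.sum_eq_single a.length]
  · simp [hM.mpow_apply]
  · intro n _ hn
    rw [hM.mpow_apply, if_neg (Ne.symm hn), mul_zero]
  · simp

theorem mExp_neg_apply (hM : IsLengthOne M) (a : List A) :
    mExp (fun b => -M b) a =
      (-1) ^ a.length * (a.length.factorial : ℂ)⁻¹ * (a.map fun x => M [x]).prod := by
  have hneg : (a.map fun x => -M [x]) = (a.map fun x => M [x]).map Neg.neg := by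
    rw [List.map_map]
    rfl
  rw [hM.neg.mExp_apply, hneg, List.prod_map_neg, List.length_map]
  ring

end IsLengthOne

theorem mExp_mI_apply (a : List A) : mExp mI a = (a.length.factorial : ℂ)⁻¹ := by
  simp [isLengthOne_mI.mExp_apply, mI]

theorem sum_range_sum_Ioc_eq_sum_range_sum_range {M : Type*} [AddCommMonoid M]
    (f : ℕ → ℕ → M) (n : ℕ) :
    ∑ i ∈ Finset.range (n + 2), ∑ j ∈ Finset.Ioc i (n + 1), f i j =
      ∑ i ∈ Finset.range (n + 1), ∑ k ∈ Finset.range (n - i + 1), f i (i + 1 + k) := by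
  rw [Finset.sum_range_succ, Finset.Ioc_self, Finset.sum_empty, add_zero]
  refine Finset.sum_congr rfl fun i hi => ?_
  rw [Finset.mem_range] at hi
  rw [← Finset.Ico_add_one_add_one_eq_Ioc, Finset.sum_Ico_eq_sum_range,
    show n + 1 + 1 - (i + 1) = n - i + 1 by omega]

end

/-- Closed formula for the mould `Sem := e^Δ(Exp Z)·(Exp I)·(Exp(−Z))` when `Z`
vanishes on all words of length `≠ 1`:
`Sem^{m_1⋯m_r} = Σ_{0 ≤ i < j ≤ r+1} e^{−(ω(m_1)+⋯+ω(m_i))}·(−1)^{r+1−j}/(i!(j−i−1)!(r+1−j)!)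
  ·(Z^{m_1}⋯Z^{m_i})·(Z^{m_j}⋯Z^{m_r})`. -/
theorem Sem_closed_formula {A : Type*} (ω : A → ℂ) (Z : Mould A)
    (hZ : ∀ a : List A, a.length ≠ 1 → Z a = 0) :
    ∀ a : List A,
      mprod (eDelta ω (mExp Z)) (mprod (mExp mI) (mExp fun b => -Z b)) a =
        ∑ i ∈ Finset.range (a.length + 2), ∑ j ∈ Finset.Ioc i (a.length + 1),
          Complex.exp (-((a.take i).map ω).sum) *
            ((-1 : ℂ) ^ (a.length + 1 - j) /
              ((i.factorial : ℂ) * ((j - i - 1).factorial : ℂ) *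
                ((a.length + 1 - j).factorial : ℂ))) *
            ((a.take i).map fun x => Z [x]).prod *
            ((a.drop (j - 1)).map fun x => Z [x]).prod := by
  intro a
  have hZ : IsLengthOne Z := hZ
  rw [mprod_mprod_apply, sum_range_sum_Ioc_eq_sum_range_sum_range]
  refine Finset.sum_congr rfl fun i hi => Finset.sum_congr rfl fun k hk => ?_
  rw [Finset.mem_range] at hi hk
  have hlen_i : (a.take i).length = i := by rw [List.length_take]; omega
  have hlen_k : ((a.drop i).take k).length = k := by
    rw [List.length_take, List.length_drop]; omega
  rw [eDelta, hZ.mExp_apply, mExp_mI_apply, hZ.mExp_neg_apply, hlen_i, hlen_k,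
    List.length_drop, show i + 1 + k - i - 1 = k by omega, show i + 1 + k - 1 = i + k by omega,
    show a.length + 1 - (i + 1 + k) = a.length - (i + k) by omega]
  field_simp

end
end
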